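/- arXiv:2310.10667 — 3 statements merged into one kernel-verified Lean document; each statement's English description precedes it below -/
import Mathlib

section
/- Let G be a finite simple undirected graph, v a vertex of G, and C(v) the connected component of G containing v. Let C_1,…,C_r be the connected components of the graph obtained from the induced subgraph on C(v) by deleting v. Then the pairwise connectivity score c(v) := P(G) − P(G∖{v}) equals binom(|C(v)|, 2) − Σ_{j=1}^{r} binom(|C_j|, 2). -/
/-- Total pairwise connectivity: the number of unordered pairs of distinct vertices
joined by a path. -/
noncomputable def pairConn {V : Type*} [Fintype V] (G : SimpleGraph V) : ℕ :=
  {p : Sym2 V | ¬ p.IsDiag ∧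
    p ∈ Sym2.fromRel (r := G.Reachable) ⟨fun _ _ h => h.symm⟩}.ncard

/-- Deleting a set of vertices from a simple graph (modelled by isolating them,
which leaves the pairwise connectivity among the remaining vertices unchanged and
contributes no connected pairs). -/
def SimpleGraph.vdel {V : Type*} (G : SimpleGraph V) (S : Set V) : SimpleGraph V where
  Adj a b := G.Adj a b ∧ a ∉ S ∧ b ∉ S
  symm := ⟨fun a b ⟨h, ha, hb⟩ => ⟨h.symm, hb, ha⟩⟩
  loopless := ⟨fun a ⟨h, _, _⟩ => G.loopless.irrefl a h⟩

/-- Pairwise connectivity score of a vertex: `c(v) = P(G) - P(G \ {v})`. -/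
noncomputable def cscore {V : Type*} [Fintype V] (G : SimpleGraph V) (v : V) : ℕ :=
  pairConn G - pairConn (G.vdel {v})

open SimpleGraph Finset

section Aux

variable {V : Type*} [Fintype V] (G : SimpleGraph V)

/-- counting nondiagonal pairs within a set -/
lemma aux_ncard_pairs (S : Set V) :
    {p : Sym2 V | ¬ p.IsDiag ∧ ∀ x ∈ p, x ∈ S}.ncard = S.ncard.choose 2 := by
  classical
  have h : {p : Sym2 V | ¬ p.IsDiag ∧ ∀ x ∈ p, x ∈ S}
      = ↑(S.toFinset.offDiag.image Sym2.mk.uncurry) := by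
    ext p
    induction p using Sym2.ind with
    | _ a b =>
      simp only [Set.mem_setOf_eq, Sym2.isDiag_iff_proj_eq, Sym2.mem_iff, Finset.coe_image,
        Set.mem_image, Finset.mem_coe, Finset.mem_offDiag, Set.mem_toFinset]
      constructor
      · rintro ⟨hne, hmem⟩
        exact ⟨(a, b), ⟨hmem a (Or.inl rfl), hmem b (Or.inr rfl), hne⟩, rfl⟩
      · rintro ⟨⟨x, y⟩, ⟨hx, hy, hxy⟩, hp⟩
        rw [Function.uncurry_apply_pair, Sym2.eq_iff] at hp
        rcases hp with ⟨rfl, rfl⟩ | ⟨rfl, rfl⟩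
        · exact ⟨hxy, by rintro z (rfl | rfl) <;> assumption⟩
        · exact ⟨fun e => hxy e.symm, by rintro z (rfl | rfl) <;> assumption⟩
  rw [h, Set.ncard_coe_finset, Sym2.card_image_offDiag, Set.ncard_eq_toFinset_card']

lemma aux_pairConn_eq_sum :
    pairConn G = ∑ᶠ C : G.ConnectedComponent, (C.supp.ncard).choose 2 := by
  classical
  haveI : Fintype G.ConnectedComponent := Fintype.ofFinite _
  rw [finsum_eq_sum_of_fintype]
  unfold pairConn
  set A : Set (Sym2 V) := {p : Sym2 V | ¬ p.IsDiag ∧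
    p ∈ Sym2.fromRel (r := G.Reachable) ⟨fun _ _ h => h.symm⟩} with hA
  rw [Set.ncard_eq_toFinset_card']
  rw [Finset.card_eq_sum_card_fiberwise
    (f := fun p => G.connectedComponentMk p.out.1) (t := Finset.univ) (fun _ _ => mem_univ _)]
  refine Finset.sum_congr rfl fun C _ => ?_
  have key : A.toFinset.filter (fun p => G.connectedComponentMk p.out.1 = C)
      = (Set.toFinset {p : Sym2 V | ¬ p.IsDiag ∧ ∀ x ∈ p, x ∈ C.supp}) := by
    ext p
    induction p using Sym2.ind with
    | _ a b =>
      simp only [Finset.mem_filter, Set.mem_toFinset, hA, Set.mem_setOf_eq,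
        Sym2.fromRel_prop, Sym2.isDiag_iff_proj_eq, Sym2.mem_iff]
      constructor
      · rintro ⟨⟨hne, hr⟩, hc⟩
        have hout := Sym2.out_fst_mem (s(a, b))
        rw [Sym2.mem_iff] at hout
        have hab : G.connectedComponentMk a = G.connectedComponentMk b :=
          ConnectedComponent.sound hr
        have ha : G.connectedComponentMk a = C := by
          rcases hout with h | h
          · rwa [h] at hc
          · rw [h] at hc; rw [hab]; exact hc
        refine ⟨hne, ?_⟩
        rintro z (rfl | rfl)
        · exact ha
        · show G.connectedComponentMk z = C
          rw [← hab]; exact ha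
      · rintro ⟨hne, hmem⟩
        have ha : G.connectedComponentMk a = C := hmem a (Or.inl rfl)
        have hb : G.connectedComponentMk b = C := hmem b (Or.inr rfl)
        refine ⟨⟨hne, ConnectedComponent.exact (ha.trans hb.symm)⟩, ?_⟩
        have hout := Sym2.out_fst_mem (s(a, b))
        rw [Sym2.mem_iff] at hout
        rcases hout with h | h <;> rw [h] <;> assumption
  rw [key, ← Set.ncard_eq_toFinset_card']
  exact aux_ncard_pairs C.supp

variable {G} {v : V}

lemma aux_reach_vdel : ∀ {a b : V}, G.Walk a b → ¬ G.Reachable a v →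
    (G.vdel {v}).Reachable a b := by
  intro a b w
  induction w with
  | nil => exact fun _ => Reachable.refl _
  | @cons a c b h p ih =>
    intro hv
    have hc : ¬ G.Reachable c v := fun hr => hv (h.reachable.trans hr)
    have ha : a ≠ v := fun e => hv (e ▸ Reachable.refl _)
    have hcv : c ≠ v := fun e => hc (e ▸ Reachable.refl _)
    exact (Adj.reachable (G := G.vdel {v}) ⟨h, ha, hcv⟩).trans (ih hc)

lemma aux_vdel_le : G.vdel {v} ≤ G := fun _ _ h => h.1

lemma aux_reach_v : ∀ {x y : V}, (G.vdel {v}).Walk x y → y = v → x = v := by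
  intro x y w
  induction w with
  | nil => exact id
  | @cons a c b h p ih =>
    intro hb
    exact absurd (by simpa using h.2.2) (by simp [ih hb])

end Aux

theorem cscore_local_formula {V : Type*} [Fintype V] (G : SimpleGraph V) (v : V) :
    cscore G v =
      ((G.connectedComponentMk v).supp.ncard).choose 2 -
        ∑ᶠ D ∈ {D : (G.vdel {v}).ConnectedComponent |
            D.supp ⊆ (G.connectedComponentMk v).supp ∧ v ∉ D.supp},
          (SimpleGraph.ConnectedComponent.supp D).ncard.choose 2 := by
  classical
  set G' := G.vdel {v} with hG'
  haveI : Fintype G.ConnectedComponent := Fintype.ofFinite _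
  haveI : Fintype G'.ConnectedComponent := Fintype.ofFinite _
  set cv := G.connectedComponentMk v with hcv
  set D0 := G'.connectedComponentMk v with hD0
  -- the lifting map
  set Φ : G'.ConnectedComponent → G.ConnectedComponent :=
    fun D => G.connectedComponentMk (Classical.choose D.exists_rep) with hΦ
  have hΦ_mk : ∀ d : V, Φ (G'.connectedComponentMk d) = G.connectedComponentMk d := by
    intro d
    have hspec := Classical.choose_spec (G'.connectedComponentMk d).exists_rep
    have hr : G'.Reachable (Classical.choose (G'.connectedComponentMk d).exists_rep) d :=
      ConnectedComponent.exact hspec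
    exact ConnectedComponent.sound (hr.mono aux_vdel_le)
  -- supp characterizations
  have hsupp_eq : ∀ D : G'.ConnectedComponent, Φ D ≠ cv → D.supp = (Φ D).supp := by
    intro D hD
    obtain ⟨d, rfl⟩ : ∃ d, G'.connectedComponentMk d = D := D.exists_rep
    rw [hΦ_mk] at hD ⊢
    have hdv : ¬ G.Reachable d v := fun hr => hD (hcv ▸ ConnectedComponent.sound hr)
    ext x
    constructor
    · intro hx
      have hr : G'.Reachable x d := ConnectedComponent.exact hx
      exact (ConnectedComponent.mem_supp_iff _ _).mpr
        (ConnectedComponent.sound (hr.mono aux_vdel_le))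
    · intro hx
      have hr : G.Reachable x d := ConnectedComponent.exact hx
      obtain ⟨w⟩ := hr
      exact (ConnectedComponent.mem_supp_iff _ _).mpr
        (ConnectedComponent.sound
          (aux_reach_vdel w (fun hxv => hdv ((Reachable.symm ⟨w⟩).trans hxv))))
  have hsub_iff : ∀ D : G'.ConnectedComponent, (D.supp ⊆ cv.supp ↔ Φ D = cv) := by
    intro D
    obtain ⟨d, rfl⟩ : ∃ d, G'.connectedComponentMk d = D := D.exists_rep
    rw [hΦ_mk]
    constructor
    · intro hsub
      exact (ConnectedComponent.mem_supp_iff _ _).mp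
        (hsub ((ConnectedComponent.mem_supp_iff _ _).mpr rfl))
    · intro h x hx
      have hr : G'.Reachable x d := ConnectedComponent.exact hx
      refine (ConnectedComponent.mem_supp_iff _ _).mpr ?_
      rw [← h]
      exact ConnectedComponent.sound (hr.mono aux_vdel_le)
  have hvmem_iff : ∀ D : G'.ConnectedComponent, (v ∉ D.supp ↔ D ≠ D0) := by
    intro D
    exact not_congr ⟨fun h => ((ConnectedComponent.mem_supp_iff D v).mp h).symm,
      fun h => (ConnectedComponent.mem_supp_iff D v).mpr h.symm⟩
  have hD0supp : D0.supp = {v} := by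
    ext x
    rw [Set.mem_singleton_iff]
    constructor
    · intro hx
      have hr : G'.Reachable x v := ConnectedComponent.exact hx
      obtain ⟨w⟩ := hr
      exact aux_reach_v w rfl
    · rintro rfl
      exact (ConnectedComponent.mem_supp_iff _ _).mpr rfl
  set f : G.ConnectedComponent → ℕ := fun C => (C.supp.ncard).choose 2 with hf
  set g : G'.ConnectedComponent → ℕ := fun D => (D.supp.ncard).choose 2 with hg
  -- rewrite the target finsum as a Finset sum
  have htarget : ∑ᶠ D ∈ {D : G'.ConnectedComponent |
        D.supp ⊆ cv.supp ∧ v ∉ D.supp}, (SimpleGraph.ConnectedComponent.supp D).ncard.choose 2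
      = ∑ D ∈ Finset.univ.filter (fun D => Φ D = cv ∧ D ≠ D0), g D := by
    have hset : {D : G'.ConnectedComponent | D.supp ⊆ cv.supp ∧ v ∉ D.supp}
        = ↑(Finset.univ.filter (fun D => Φ D = cv ∧ D ≠ D0)) := by
      ext D
      simp only [Finset.coe_filter, Set.mem_setOf_eq, Finset.mem_univ, true_and]
      exact and_congr (hsub_iff D) (hvmem_iff D)
    rw [hset, finsum_mem_coe_finset]
  -- pairConn of G
  have hPG : pairConn G = (∑ C ∈ Finset.univ.filter (fun C => C ≠ cv), f C) + f cv := by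
    rw [aux_pairConn_eq_sum, finsum_eq_sum_of_fintype]
    rw [← Finset.sum_filter_add_sum_filter_not Finset.univ (fun C => C ≠ cv) f]
    congr 1
    have : Finset.univ.filter (fun C => ¬ C ≠ cv) = {cv} := by
      ext C; simp
    rw [this, Finset.sum_singleton]
  -- pairConn of G'
  have hbij : ∑ D ∈ Finset.univ.filter (fun D => Φ D ≠ cv), g D
      = ∑ C ∈ Finset.univ.filter (fun C => C ≠ cv), f C := by
    refine Finset.sum_bij (fun D _ => Φ D) ?_ ?_ ?_ ?_
    · intro D hD
      simp only [Finset.mem_filter, Finset.mem_univ, true_and] at hD ⊢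
      exact hD
    · intro D1 h1 D2 h2 he
      simp only [Finset.mem_filter, Finset.mem_univ, true_and] at h1 h2
      have he' : Φ D1 = Φ D2 := he
      apply ConnectedComponent.supp_injective
      rw [hsupp_eq D1 h1, hsupp_eq D2 h2, he']
    · intro C hC
      simp only [Finset.mem_filter, Finset.mem_univ, true_and] at hC
      obtain ⟨c, rfl⟩ := C.exists_rep
      refine ⟨G'.connectedComponentMk c, ?_, hΦ_mk c⟩
      simp only [Finset.mem_filter, Finset.mem_univ, true_and, hΦ_mk c]
      exact hC
    · intro D hD
      simp only [Finset.mem_filter, Finset.mem_univ, true_and] at hD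
      simp only [hf, hg, hsupp_eq D hD]
  have hsplit2 : ∑ D ∈ Finset.univ.filter (fun D => ¬ Φ D ≠ cv), g D
      = (∑ D ∈ Finset.univ.filter (fun D => Φ D = cv ∧ D ≠ D0), g D) + g D0 := by
    have hmem : D0 ∈ Finset.univ.filter (fun D => ¬ Φ D ≠ cv) := by
      simp only [Finset.mem_filter, Finset.mem_univ, true_and, not_not]
      show Φ (G'.connectedComponentMk v) = cv
      rw [hΦ_mk v, hcv]
    rw [← Finset.sum_erase_add _ _ hmem]
    congr 1
    apply Finset.sum_congr _ (fun _ _ => rfl)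
    ext D
    simp only [Finset.mem_erase, Finset.mem_filter, Finset.mem_univ, true_and, not_not]
    tauto
  have hgD0 : g D0 = 0 := by
    simp [hg, hD0supp]
  have hPG' : pairConn G' = (∑ C ∈ Finset.univ.filter (fun C => C ≠ cv), f C)
      + ∑ D ∈ Finset.univ.filter (fun D => Φ D = cv ∧ D ≠ D0), g D := by
    rw [aux_pairConn_eq_sum, finsum_eq_sum_of_fintype]
    rw [← Finset.sum_filter_add_sum_filter_not Finset.univ (fun D => Φ D ≠ cv) g]
    rw [hbij, hsplit2, hgD0, add_zero]
  show pairConn G - pairConn G' = _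
  rw [hPG, hPG', htarget, Nat.add_sub_add_left]
end

section
/- Let G be a finite simple undirected graph and e = {a,b} an edge of G that is not a bridge (i.e., a and b are still connected in G−e). Then for every vertex v, c_{G−e}(v) ≥ c_G(v), where c_H(v) := P(H) − P(H∖{v}). -/
namespace SimpleGraph

variable {V : Type*}

lemma Reachable.of_forall_adj {G H : SimpleGraph V} (h : ∀ ⦃u v⦄, G.Adj u v → H.Reachable u v)
    {x y : V} (hxy : G.Reachable x y) : H.Reachable x y := by
  rw [reachable_iff_reflTransGen] at hxy ⊢
  exact hxy.lift' id fun u v huv => (reachable_iff_reflTransGen u v).1 (h huv)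

lemma reachable_deleteEdges_eq_of_reachable {G : SimpleGraph V} {a b : V}
    (hab : (G.deleteEdges {s(a, b)}).Reachable a b) :
    (G.deleteEdges {s(a, b)}).Reachable = G.Reachable := by
  ext x y
  refine ⟨Reachable.mono (deleteEdges_le _), Reachable.of_forall_adj fun u v huv => ?_⟩
  by_cases he : s(u, v) = s(a, b)
  · rcases Sym2.eq_iff.1 he with ⟨rfl, rfl⟩ | ⟨rfl, rfl⟩
    · exact hab
    · exact hab.symm
  · exact (deleteEdges_adj.2 ⟨huv, he⟩).reachable

lemma vdel_mono {G H : SimpleGraph V} (h : H ≤ G) (S : Set V) : H.vdel S ≤ G.vdel S :=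
  fun _ _ hxy => ⟨h hxy.1, hxy.2⟩

end SimpleGraph

lemma pairConn_le_of_reachable_le {V : Type*} [Fintype V] {G H : SimpleGraph V}
    (h : G.Reachable ≤ H.Reachable) : pairConn G ≤ pairConn H := by
  refine Set.ncard_le_ncard (fun p hp => ?_) (Set.toFinite _)
  induction p using Sym2.ind with
  | _ x y => exact ⟨hp.1, h x y hp.2⟩

lemma pairConn_congr {V : Type*} [Fintype V] {G H : SimpleGraph V}
    (h : G.Reachable = H.Reachable) : pairConn G = pairConn H :=
  (pairConn_le_of_reachable_le h.le).antisymm (pairConn_le_of_reachable_le h.ge)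

lemma pairConn_mono {V : Type*} [Fintype V] {G H : SimpleGraph V} (h : H ≤ G) :
    pairConn H ≤ pairConn G :=
  pairConn_le_of_reachable_le (SimpleGraph.Reachable.mono' h)

theorem cscore_mono_of_nonbridge_general {V : Type*} [Fintype V]
    (G : SimpleGraph V) (a b : V)
    (hnb : (G.deleteEdges {s(a, b)}).Reachable a b) :
    ∀ v : V, cscore G v ≤ cscore (G.deleteEdges {s(a, b)}) v := by
  intro v
  have hP : pairConn (G.deleteEdges {s(a, b)}) = pairConn G :=
    pairConn_congr (SimpleGraph.reachable_deleteEdges_eq_of_reachable hnb)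
  have hPv : pairConn ((G.deleteEdges {s(a, b)}).vdel {v}) ≤ pairConn (G.vdel {v}) :=
    pairConn_mono (SimpleGraph.vdel_mono (G.deleteEdges_le _) _)
  rw [cscore, cscore, hP]
  exact Nat.sub_le_sub_left hPv _

theorem cscore_mono_of_nonbridge {V : Type*} [Fintype V]
    (G : SimpleGraph V) (a b : V) (hab : G.Adj a b)
    (hnb : (G.deleteEdges {s(a, b)}).Reachable a b) :
    ∀ v : V, cscore G v ≤ cscore (G.deleteEdges {s(a, b)}) v :=
  cscore_mono_of_nonbridge_general G a b hnb
end

section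
/- Let G be a finite simple undirected graph with connected vertices s ≠ t, and let G' be obtained from G by attaching q new pendant vertices adjacent only to s and q new pendant vertices adjacent only to t. If a vertex v ∉ {s, t} of G lies on every shortest s–t path in G, then the betweenness centrality of v in G' is at least q². -/
/-! Every walk in `G'` from `x ∈ X` to `y ∈ Y` begins with the edge `x s` and ends with `t y`;
collapsing each pendant vertex onto its attachment point turns the part in between into a walk
of `G` from `s` to `t` that is no longer and visits no new vertex. Hence a shortest `x`–`y` walk
of `G'` has length `d(s, t) + 2` and contains a shortest `s`–`t` walk of `G`, so it passes
through `v`. Each of the `2q²` ordered pairs in `X × Y ∪ Y × X` therefore contributes `1` to the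
sum of which the betweenness is half. -/

/-- The number of shortest `s`–`t` paths in `G` (walks of minimal length, which are
automatically paths). -/
noncomputable def numShortest {V : Type*} (G : SimpleGraph V) (s t : V) : ℕ :=
  {p : G.Walk s t | p.length = G.dist s t}.ncard

/-- The number of shortest `s`–`t` paths in `G` passing through the vertex `v`. -/
noncomputable def numShortestThrough {V : Type*} (G : SimpleGraph V) (s t v : V) : ℕ :=
  {p : G.Walk s t | p.length = G.dist s t ∧ v ∈ p.support}.ncard

/-- Betweenness centrality of `v`: the sum, over unordered pairs of distinct vertices
both different from `v`, of the fraction of shortest paths through `v`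
(here written as half the sum over ordered pairs; the ratio is `0` when there is no
path between the pair). -/
noncomputable def betweenness {V : Type*} [Fintype V] [DecidableEq V]
    (G : SimpleGraph V) (v : V) : ℝ :=
  (1 / 2) * ∑ p : V × V,
    if p.1 ≠ v ∧ p.2 ≠ v ∧ p.1 ≠ p.2 then
      (numShortestThrough G p.1 p.2 v : ℝ) / (numShortest G p.1 p.2)
    else 0

open SimpleGraph Finset

theorem SimpleGraph.Walk.exists_walk_length_le_support_subset_map {V W : Type*}
    {G : SimpleGraph V} {H : SimpleGraph W} (f : V → W)
    (hf : ∀ a b, G.Adj a b → f a = f b ∨ H.Adj (f a) (f b)) {u w : V} (p : G.Walk u w) :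
    ∃ q : H.Walk (f u) (f w), q.length ≤ p.length ∧ q.support ⊆ p.support.map f := by
  induction p with
  | nil => exact ⟨.nil, le_rfl, by simp⟩
  | cons h p ih =>
    obtain ⟨q, hlen, hsupp⟩ := ih
    rcases hf _ _ h with heq | hadj
    · refine ⟨q.copy heq.symm rfl, by simp; omega, ?_⟩
      simpa using List.subset_cons_of_subset _ hsupp
    · exact ⟨.cons hadj q, by simpa using hlen, by simpa using List.cons_subset_cons _ hsupp⟩

def OnAllGeodesics {V : Type*} (G : SimpleGraph V) (v a b : V) : Prop :=
  G.Reachable a b ∧ ∀ p : G.Walk a b, p.length = G.dist a b → v ∈ p.support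

namespace OnAllGeodesics

variable {V : Type*} {G : SimpleGraph V} {v a b : V}

theorem symm (h : OnAllGeodesics G v a b) : OnAllGeodesics G v b a := by
  refine ⟨h.1.symm, fun p hp => ?_⟩
  simpa using h.2 p.reverse (by rw [Walk.length_reverse, hp, dist_comm])

theorem left_ne_right (h : OnAllGeodesics G v a b) (hav : a ≠ v) : a ≠ b := by
  rintro rfl
  have hva : v ∈ (Walk.nil : G.Walk a a).support := h.2 .nil dist_self.symm
  exact hav (List.mem_singleton.mp hva).symm

theorem numShortestThrough_div_numShortest [Finite V] (h : OnAllGeodesics G v a b) :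
    (numShortestThrough G a b v : ℝ) / numShortest G a b = 1 := by
  classical
  have : Fintype V := Fintype.ofFinite V
  obtain ⟨p, hp⟩ := h.1.exists_walk_length_eq_dist
  have hsame : numShortestThrough G a b v = numShortest G a b := by
    unfold numShortestThrough numShortest
    congr 1
    ext q
    exact and_iff_left_of_imp (h.2 q)
  have hpos : 0 < numShortest G a b := (Set.ncard_pos (Set.toFinite _)).2 ⟨p, hp⟩
  rw [hsame, div_self (by exact_mod_cast hpos.ne')]

end OnAllGeodesics

section PendantExtension

variable {V : Type*} [DecidableEq V]

structure IsPendantExtension (G G' : SimpleGraph V) (s t : V) (X Y : Finset V) : Prop where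
  disjoint : Disjoint X Y
  s_notMem : s ∉ X ∪ Y
  t_notMem : t ∉ X ∪ Y
  not_adj : ∀ z ∈ X ∪ Y, ∀ a, ¬ G.Adj z a
  adj_iff : ∀ a b, G'.Adj a b ↔ G.Adj a b ∨ (a ∈ X ∧ b = s) ∨ (b ∈ X ∧ a = s) ∨
      (a ∈ Y ∧ b = t) ∨ (b ∈ Y ∧ a = t)

def pendantRetraction (s t : V) (X Y : Finset V) (z : V) : V :=
  if z ∈ X then s else if z ∈ Y then t else z

theorem pendantRetraction_eq {s t : V} {X Y : Finset V} (z : V) :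
    pendantRetraction s t X Y z = z ∨ pendantRetraction s t X Y z = s ∨
      pendantRetraction s t X Y z = t := by
  unfold pendantRetraction
  split_ifs <;> simp

theorem pendantRetraction_of_notMem {s t z : V} {X Y : Finset V} (hz : z ∉ X ∪ Y) :
    pendantRetraction s t X Y z = z := by
  simp_all [pendantRetraction]

namespace IsPendantExtension

variable {G G' : SimpleGraph V} {s t : V} {X Y : Finset V}

theorem swap (hP : IsPendantExtension G G' s t X Y) : IsPendantExtension G G' t s Y X where
  disjoint := hP.disjoint.symm
  s_notMem := Finset.union_comm X Y ▸ hP.t_notMem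
  t_notMem := Finset.union_comm X Y ▸ hP.s_notMem
  not_adj z hz := hP.not_adj z (Finset.union_comm Y X ▸ hz)
  adj_iff a b := (hP.adj_iff a b).trans (by tauto)

theorem le (hP : IsPendantExtension G G' s t X Y) : G ≤ G' :=
  fun a b h => (hP.adj_iff a b).2 (.inl h)

theorem adj_iff_of_mem_left (hP : IsPendantExtension G G' s t X Y) {x : V} (hx : x ∈ X)
    (a : V) : G'.Adj x a ↔ a = s := by
  have := hP.not_adj x (mem_union_left _ hx) a
  have := disjoint_left.mp hP.disjoint hx
  have := hP.s_notMem
  have := hP.t_notMem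
  rw [hP.adj_iff]
  grind

theorem adj_pendantRetraction (hP : IsPendantExtension G G' s t X Y) {a b : V}
    (h : G'.Adj a b) :
    pendantRetraction s t X Y a = pendantRetraction s t X Y b ∨
      G.Adj (pendantRetraction s t X Y a) (pendantRetraction s t X Y b) := by
  have := hP.not_adj a
  have : b ∈ X ∪ Y → ¬ G.Adj a b := fun hb hab => hP.not_adj b hb a hab.symm
  have := hP.s_notMem
  have := hP.t_notMem
  have := disjoint_left.mp hP.disjoint
  rw [hP.adj_iff] at h
  unfold pendantRetraction
  grind

theorem exists_walk_length_le_support_subset (hP : IsPendantExtension G G' s t X Y)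
    (p : G'.Walk s t) :
    ∃ q : G.Walk s t, q.length ≤ p.length ∧ q.support ⊆ p.support := by
  obtain ⟨q, hlen, hsupp⟩ :=
    p.exists_walk_length_le_support_subset_map _ fun _ _ => hP.adj_pendantRetraction
  refine ⟨q.copy (pendantRetraction_of_notMem hP.s_notMem)
    (pendantRetraction_of_notMem hP.t_notMem), by simpa using hlen, fun w hw => ?_⟩
  obtain ⟨z, hz, rfl⟩ := List.mem_map.mp (hsupp (by simpa using hw))
  rcases pendantRetraction_eq (s := s) (t := t) (X := X) (Y := Y) z with h | h | h <;> rw [h]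
  · exact hz
  · exact p.start_mem_support
  · exact p.end_mem_support

theorem exists_tail_of_mem_left (hP : IsPendantExtension G G' s t X Y) {x b : V} (hx : x ∈ X)
    (p : G'.Walk x b) (hb : b ≠ x) :
    ∃ p' : G'.Walk s b, p'.length + 1 = p.length ∧ p'.support ⊆ p.support := by
  cases p with
  | nil => exact absurd rfl hb
  | cons h p' =>
    obtain rfl := (hP.adj_iff_of_mem_left hx _).1 h
    exact ⟨p', by simp, by simp⟩

theorem exists_inner_walk (hP : IsPendantExtension G G' s t X Y) {x y : V} (hx : x ∈ X)
    (hy : y ∈ Y) (p : G'.Walk x y) :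
    ∃ p' : G'.Walk s t, p'.length + 2 = p.length ∧ p'.support ⊆ p.support := by
  have hyx : y ≠ x := by rintro rfl; exact disjoint_left.mp hP.disjoint hx hy
  have hsy : s ≠ y := by rintro rfl; exact hP.s_notMem (mem_union_right _ hy)
  obtain ⟨p₁, hl₁, hs₁⟩ := hP.exists_tail_of_mem_left hx p hyx
  obtain ⟨p₂, hl₂, hs₂⟩ := hP.swap.exists_tail_of_mem_left hy p₁.reverse hsy
  refine ⟨p₂.reverse, by simp only [Walk.length_reverse] at hl₂ ⊢; omega, fun z hz => hs₁ ?_⟩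
  simpa using hs₂ (by simpa using hz)

theorem exists_walk_length_eq (hP : IsPendantExtension G G' s t X Y) {x y : V} (hx : x ∈ X)
    (hy : y ∈ Y) (W : G.Walk s t) :
    ∃ p : G'.Walk x y, p.length = W.length + 2 :=
  ⟨.cons ((hP.adj_iff_of_mem_left hx s).2 rfl)
    ((W.mapLe hP.le).concat ((hP.swap.adj_iff_of_mem_left hy t).2 rfl).symm), by simp⟩

theorem onAllGeodesics (hP : IsPendantExtension G G' s t X Y) {v x y : V}
    (h : OnAllGeodesics G v s t) (hx : x ∈ X) (hy : y ∈ Y) :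
    OnAllGeodesics G' v x y := by
  obtain ⟨W, hW⟩ := h.1.exists_walk_length_eq_dist
  obtain ⟨p₀, hp₀⟩ := hP.exists_walk_length_eq hx hy W
  refine ⟨p₀.reachable, fun p hp => ?_⟩
  obtain ⟨p', hl', hs'⟩ := hP.exists_inner_walk hx hy p
  obtain ⟨q, hlq, hsq⟩ := hP.exists_walk_length_le_support_subset p'
  have hxy : G'.dist x y ≤ G.dist s t + 2 := hW ▸ hp₀ ▸ dist_le p₀
  have hst : G.dist s t ≤ q.length := dist_le q
  exact hs' (hsq (h.2 q (by omega)))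

end IsPendantExtension

end PendantExtension

theorem card_le_two_mul_betweenness {V : Type*} [Fintype V] [DecidableEq V]
    {G : SimpleGraph V} {v : V} (S : Finset (V × V))
    (hS : ∀ p ∈ S, p.1 ≠ v ∧ p.2 ≠ v ∧ OnAllGeodesics G v p.1 p.2) :
    (#S : ℝ) ≤ 2 * betweenness G v := by
  unfold betweenness
  rw [← mul_assoc, show (2 : ℝ) * (1 / 2) = 1 by norm_num, one_mul]
  calc (#S : ℝ)
      = ∑ p ∈ S, if p.1 ≠ v ∧ p.2 ≠ v ∧ p.1 ≠ p.2 then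
          (numShortestThrough G p.1 p.2 v : ℝ) / numShortest G p.1 p.2 else 0 := by
        rw [card_eq_sum_ones, Nat.cast_sum]
        refine sum_congr rfl fun p hp => ?_
        obtain ⟨h₁, h₂, h⟩ := hS p hp
        rw [if_pos ⟨h₁, h₂, h.left_ne_right h₁⟩, h.numShortestThrough_div_numShortest, Nat.cast_one]
    _ ≤ _ := sum_le_sum_of_subset_of_nonneg (subset_univ S) fun p _ _ => by
        split_ifs <;> positivity

theorem betweenness_ge_q_sq_of_pendants_general {V : Type*} [Fintype V] [DecidableEq V]
    (G G' : SimpleGraph V) (s t : V) (q : ℕ) (X Y : Finset V)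
    (hreach : G.Reachable s t)
    (hX : X.card = q) (hY : Y.card = q) (hXY : Disjoint X Y)
    (hsX : s ∉ X ∪ Y) (htX : t ∉ X ∪ Y)
    (hiso : ∀ z ∈ X ∪ Y, ∀ a, ¬ G.Adj z a)
    (hG' : ∀ a b, G'.Adj a b ↔ G.Adj a b ∨ (a ∈ X ∧ b = s) ∨ (b ∈ X ∧ a = s) ∨
      (a ∈ Y ∧ b = t) ∨ (b ∈ Y ∧ a = t))
    (v : V) (hvXY : v ∉ X ∪ Y)
    (hvon : ∀ p : G.Walk s t, p.length = G.dist s t → v ∈ p.support) :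
    (q ^ 2 : ℝ) ≤ betweenness G' v := by
  have hP : IsPendantExtension G G' s t X Y := ⟨hXY, hsX, htX, hiso, hG'⟩
  have hvX : v ∉ X := fun h => hvXY (mem_union_left _ h)
  have hvY : v ∉ Y := fun h => hvXY (mem_union_right _ h)
  have hpairs : ∀ p ∈ X ×ˢ Y ∪ Y ×ˢ X, p.1 ≠ v ∧ p.2 ≠ v ∧ OnAllGeodesics G' v p.1 p.2 := by
    simp only [mem_union, mem_product]
    rintro ⟨a, b⟩ (⟨ha, hb⟩ | ⟨ha, hb⟩)
    · exact ⟨ne_of_mem_of_not_mem ha hvX, ne_of_mem_of_not_mem hb hvY,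
        hP.onAllGeodesics ⟨hreach, hvon⟩ ha hb⟩
    · exact ⟨ne_of_mem_of_not_mem ha hvY, ne_of_mem_of_not_mem hb hvX,
        (hP.onAllGeodesics ⟨hreach, hvon⟩ hb ha).symm⟩
  have hcard : #(X ×ˢ Y ∪ Y ×ˢ X) = 2 * q ^ 2 := by
    rw [card_union_of_disjoint (disjoint_product.2 (.inl hXY)), card_product, card_product, hX, hY]
    ring
  have := card_le_two_mul_betweenness _ hpairs
  rw [hcard] at this
  push_cast at this
  linarith

theorem betweenness_ge_q_sq_of_pendants {V : Type*} [Fintype V] [DecidableEq V]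
    (G G' : SimpleGraph V) (s t : V) (q : ℕ) (X Y : Finset V)
    (hst : s ≠ t) (hreach : G.Reachable s t)
    (hX : X.card = q) (hY : Y.card = q) (hXY : Disjoint X Y)
    (hsX : s ∉ X ∪ Y) (htX : t ∉ X ∪ Y)
    (hiso : ∀ z ∈ X ∪ Y, ∀ a, ¬ G.Adj z a)
    (hG' : ∀ a b, G'.Adj a b ↔ G.Adj a b ∨ (a ∈ X ∧ b = s) ∨ (b ∈ X ∧ a = s) ∨
      (a ∈ Y ∧ b = t) ∨ (b ∈ Y ∧ a = t))
    (v : V) (hvs : v ≠ s) (hvt : v ≠ t) (hvXY : v ∉ X ∪ Y)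
    (hvon : ∀ p : G.Walk s t, p.length = G.dist s t → v ∈ p.support) :
    (q ^ 2 : ℝ) ≤ betweenness G' v :=
  betweenness_ge_q_sq_of_pendants_general G G' s t q X Y hreach hX hY hXY hsX htX hiso hG' v hvXY
    hvon
end
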